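/- Let u, v be linearly independent unit vectors in ℝ² and let f = (f₁, f₂) be a vector field on ℝ² with f₁, f₂ ∈ C²_c(ℝ²) such that div f(x) = 0 for all x ∈ ℝ². If L f(x) = 0 for all x ∈ ℝ², then f = 0 identically. That is, the longitudinal V-line transform is injective on compactly supported divergence-free vector fields. -/

import Mathlib

open MeasureTheory Matrix

noncomputable section

/-- Dot product on ℝ². -/
def dot2 (u v : ℝ × ℝ) : ℝ := u.1 * v.1 + u.2 * v.2

/-- `x^⊥ = (-x₂, x₁)`. -/
def perp2 (x : ℝ × ℝ) : ℝ × ℝ := (-x.2, x.1)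

/-- Divergent beam transform `X_u h (x) = ∫₀^∞ h(x + t u) dt`. -/
def Xbeam (u : ℝ × ℝ) (h : ℝ × ℝ → ℝ) (x : ℝ × ℝ) : ℝ :=
  ∫ t in Set.Ioi (0 : ℝ), h (x + t • u)

/-- First moment divergent beam transform `X¹_u h (x) = ∫₀^∞ t h(x + t u) dt`. -/
def Xmom (u : ℝ × ℝ) (h : ℝ × ℝ → ℝ) (x : ℝ × ℝ) : ℝ :=
  ∫ t in Set.Ioi (0 : ℝ), t * h (x + t • u)

/-- Directional derivative `D_u h = u · ∇ h`. -/
def Ddir (u : ℝ × ℝ) (h : ℝ × ℝ → ℝ) (x : ℝ × ℝ) : ℝ := fderiv ℝ h x u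

/-- Twice continuously differentiable, compactly supported. -/
def IsC2c (h : ℝ × ℝ → ℝ) : Prop := ContDiff ℝ 2 h ∧ HasCompactSupport h

/-- `div f = ∂f₁/∂x₁ + ∂f₂/∂x₂`. -/
def divf (f₁ f₂ : ℝ × ℝ → ℝ) (x : ℝ × ℝ) : ℝ :=
  fderiv ℝ f₁ x (1, 0) + fderiv ℝ f₂ x (0, 1)

/-- `curl f = ∂f₂/∂x₁ - ∂f₁/∂x₂`. -/
def curlf (f₁ f₂ : ℝ × ℝ → ℝ) (x : ℝ × ℝ) : ℝ :=
  fderiv ℝ f₂ x (1, 0) - fderiv ℝ f₁ x (0, 1)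

/-- Longitudinal V-line transform `L f = -X_u (f·u) + X_v (f·v)`. -/
def VlineL (u v : ℝ × ℝ) (f₁ f₂ : ℝ × ℝ → ℝ) (x : ℝ × ℝ) : ℝ :=
  - Xbeam u (fun y => f₁ y * u.1 + f₂ y * u.2) x
  + Xbeam v (fun y => f₁ y * v.1 + f₂ y * v.2) x

/-- Transverse V-line transform `T f = -X_u (f·u^⊥) + X_v (f·v^⊥)`. -/
def VlineT (u v : ℝ × ℝ) (f₁ f₂ : ℝ × ℝ → ℝ) (x : ℝ × ℝ) : ℝ :=
  - Xbeam u (fun y => f₁ y * (perp2 u).1 + f₂ y * (perp2 u).2) x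
  + Xbeam v (fun y => f₁ y * (perp2 v).1 + f₂ y * (perp2 v).2) x

/-- First moment longitudinal V-line transform `I f = -X¹_u (f·u) + X¹_v (f·v)`. -/
def VmomL (u v : ℝ × ℝ) (f₁ f₂ : ℝ × ℝ → ℝ) (x : ℝ × ℝ) : ℝ :=
  - Xmom u (fun y => f₁ y * u.1 + f₂ y * u.2) x
  + Xmom v (fun y => f₁ y * v.1 + f₂ y * v.2) x

/-- First moment transverse V-line transform `J f = -X¹_u (f·u^⊥) + X¹_v (f·v^⊥)`. -/
def VmomT (u v : ℝ × ℝ) (f₁ f₂ : ℝ × ℝ → ℝ) (x : ℝ × ℝ) : ℝ :=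
  - Xmom u (fun y => f₁ y * (perp2 u).1 + f₂ y * (perp2 u).2) x
  + Xmom v (fun y => f₁ y * (perp2 v).1 + f₂ y * (perp2 v).2) x

/-- Radon transform `R h (ψ, s) = ∫_ℝ h (s ψ + t ψ^⊥) dt`. -/
def Radon2 (h : ℝ × ℝ → ℝ) (ψ : ℝ × ℝ) (s : ℝ) : ℝ :=
  ∫ t : ℝ, h (s • ψ + t • perp2 ψ)

/-- The (vector-valued) star transform. -/
def starS (m : ℕ) (γ : Fin m → ℝ × ℝ) (c : Fin m → ℝ)
    (f₁ f₂ : ℝ × ℝ → ℝ) (x : ℝ × ℝ) : ℝ × ℝ :=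
  ∑ i, c i •
    (Xbeam (γ i) (fun y => f₁ y * (γ i).1 + f₂ y * (γ i).2) x,
     Xbeam (γ i) (fun y => f₁ y * (perp2 (γ i)).1 + f₂ y * (perp2 (γ i)).2) x)

/-- `γ(ψ) = -∑ cᵢ γᵢ / (ψ·γᵢ)`. -/
def starGamma (m : ℕ) (γ : Fin m → ℝ × ℝ) (c : Fin m → ℝ) (ψ : ℝ × ℝ) : ℝ × ℝ :=
  - ∑ i, (c i / dot2 ψ (γ i)) • γ i

/-- A star configuration is symmetric if `m = 2k` and, after re-indexing by a
permutation, `γᵢ = -γ_{k+i}` and `cᵢ = -c_{k+i}` for `i = 1, …, k`. -/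
def StarSymmetric (m : ℕ) (γ : Fin m → ℝ × ℝ) (c : Fin m → ℝ) : Prop :=
  ∃ k : ℕ, ∃ hk : m = 2 * k, ∃ σ : Equiv.Perm (Fin m),
    ∀ i : Fin m, ∀ hi : (i : ℕ) < k,
      γ (σ i) = - γ (σ ⟨(i : ℕ) + k, by omega⟩) ∧
      c (σ i) = - c (σ ⟨(i : ℕ) + k, by omega⟩)

/-!
If `L f = 0`, the beam transforms `φ = X_u (f·u) = X_v (f·v)` agree, so `φ` decreases along `u`
at rate `f·u` and along `v` at rate `f·v`. Comparing the two ways of going from `x` to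
`x + s u + r v` along the sides of a parallelogram, then differentiating in `r` and in `s` at `0`,
gives `D_u (f·v) = D_v (f·u)`; the difference of the two sides is `det(u, v) · curl f`. Hence `f`
is curl- and divergence-free, which are the Cauchy–Riemann equations of `f₁ - i f₂`. An entire
function with compact support vanishes by Liouville's theorem.
-/

open Set Filter Topology Interval intervalIntegral

lemma HasCompactSupport.comp_add_smul {E M : Type*} [NormedAddCommGroup E] [NormedSpace ℝ E]
    [Zero M] {g : E → M} (hg : HasCompactSupport g) {w : E} (hw : w ≠ 0) (x : E) :
    HasCompactSupport fun t : ℝ => g (x + t • w) :=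
  hg.comp_isClosedEmbedding
    ((Homeomorph.addLeft x).isClosedEmbedding.comp (isClosedEmbedding_smul_left hw))

lemma setIntegral_Ioi_zero_comp_add_right {E : Type*} [NormedAddCommGroup E] [NormedSpace ℝ E]
    {h : ℝ → E} (hh : Integrable h) (s : ℝ) :
    ∫ t in Ioi (0 : ℝ), h (t + s) = (∫ t in Ioi (0 : ℝ), h t) - ∫ t in (0 : ℝ)..s, h t := by
  have hshift : ∫ t in Ioi (0 : ℝ), h (t + s) = ∫ t in Ioi s, h t := by
    have hpre : Ioi (0 : ℝ) = (· + s) ⁻¹' Ioi s := by ext t; simp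
    rw [hpre, ← (measurableEmbedding_addRight s).setIntegral_map, map_add_right_eq_self]
  rw [hshift, ← integral_Ioi_sub_Ioi' hh.integrableOn hh.integrableOn, sub_sub_cancel]

lemma Xbeam_add_smul_self {g : ℝ × ℝ → ℝ} (hgc : Continuous g) (hgs : HasCompactSupport g)
    {w : ℝ × ℝ} (hw : w ≠ 0) (x : ℝ × ℝ) (s : ℝ) :
    Xbeam w g (x + s • w) = Xbeam w g x - ∫ t in (0 : ℝ)..s, g (x + t • w) := by
  have hint : Integrable fun t : ℝ => g (x + t • w) :=
    (by fun_prop : Continuous fun t : ℝ => g (x + t • w)).integrable_of_hasCompactSupport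
      (hgs.comp_add_smul hw x)
  rw [Xbeam, Xbeam, ← setIntegral_Ioi_zero_comp_add_right hint]
  congr 1
  ext t
  rw [add_smul, add_right_comm, add_assoc]

lemma integral_add_integral_eq_of_Xbeam_eq {g₁ g₂ : ℝ × ℝ → ℝ}
    (hc₁ : Continuous g₁) (hs₁ : HasCompactSupport g₁)
    (hc₂ : Continuous g₂) (hs₂ : HasCompactSupport g₂)
    {u v : ℝ × ℝ} (hu : u ≠ 0) (hv : v ≠ 0) (h : Xbeam u g₁ = Xbeam v g₂)
    (x : ℝ × ℝ) (s r : ℝ) :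
    (∫ t in (0 : ℝ)..s, g₁ (x + t • u)) + ∫ t in (0 : ℝ)..r, g₂ (x + s • u + t • v) =
      (∫ t in (0 : ℝ)..r, g₂ (x + t • v)) + ∫ t in (0 : ℝ)..s, g₁ (x + t • u + r • v) := by
  have hshift_v : ∀ y r,
      Xbeam u g₁ (y + r • v) = Xbeam u g₁ y - ∫ t in (0 : ℝ)..r, g₂ (y + t • v) := fun y r => by
    rw [h]
    exact Xbeam_add_smul_self hc₂ hs₂ hv y r
  have hvu := hshift_v (x + s • u) r
  rw [Xbeam_add_smul_self hc₁ hs₁ hu x s] at hvu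
  have huv := Xbeam_add_smul_self hc₁ hs₁ hu (x + r • v) s
  rw [hshift_v x r] at huv
  simp_rw [add_right_comm x (r • v)] at huv
  linarith

lemma hasDerivAt_intervalIntegral_comp_add_smul {E F : Type*} [NormedAddCommGroup E]
    [NormedSpace ℝ E] [NormedAddCommGroup F] [NormedSpace ℝ F] {g : E → F}
    (hg : ContDiff ℝ 1 g) {γ : ℝ → E} (hγ : Continuous γ) (v : E) (a b : ℝ) :
    HasDerivAt (fun r : ℝ => ∫ t in a..b, g (γ t + r • v))
      (∫ t in a..b, fderiv ℝ g (γ t) v) 0 := by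
  have hg' : Continuous (fderiv ℝ g) := hg.continuous_fderiv one_ne_zero
  have hK : IsCompact
      ((fun p : ℝ × ℝ => γ p.1 + p.2 • v) '' (uIcc a b ×ˢ Metric.closedBall 0 1)) :=
    (isCompact_uIcc.prod (isCompact_closedBall 0 1)).image (by fun_prop)
  obtain ⟨C, hC⟩ := hK.exists_bound_of_continuousOn hg'.continuousOn
  have hbound : ∀ t ∈ Ι a b, ∀ r ∈ Metric.ball (0 : ℝ) 1,
      ‖fderiv ℝ g (γ t + r • v) v‖ ≤ C * ‖v‖ := fun t ht r hr =>
    (ContinuousLinearMap.le_opNorm _ _).trans <| mul_le_mul_of_nonneg_right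
      (hC _ ⟨(t, r), ⟨uIoc_subset_uIcc ht, Metric.ball_subset_closedBall hr⟩, rfl⟩) (norm_nonneg v)
  have hderiv : ∀ t r,
      HasDerivAt (fun r : ℝ => g (γ t + r • v)) (fderiv ℝ g (γ t + r • v) v) r := fun t r =>
    (hg.differentiable one_ne_zero _).hasFDerivAt.comp_hasDerivAt r
      (((hasDerivAt_id r).smul_const v).const_add (γ t)) |>.congr_deriv (by simp)
  have hdom := hasDerivAt_integral_of_dominated_loc_of_deriv_le (μ := volume) (x₀ := (0 : ℝ))
    (F := fun r t => g (γ t + r • v)) (F' := fun r t => fderiv ℝ g (γ t + r • v) v)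
    (Metric.ball_mem_nhds 0 one_pos)
    (Eventually.of_forall fun r =>
      (by fun_prop : Continuous fun t => g (γ t + r • v)).aestronglyMeasurable)
    ((by fun_prop : Continuous fun t => g (γ t + (0 : ℝ) • v)).intervalIntegrable a b)
    ((hg'.comp (by fun_prop : Continuous fun t => γ t + (0 : ℝ) • v)).clm_apply
      continuous_const).aestronglyMeasurable
    (Eventually.of_forall hbound) intervalIntegrable_const
    (Eventually.of_forall fun t _ r _ => hderiv t r)
  simpa using hdom.2

lemma fderiv_apply_eq_of_Xbeam_eq {g₁ g₂ : ℝ × ℝ → ℝ}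
    (hg₁ : ContDiff ℝ 1 g₁) (hs₁ : HasCompactSupport g₁)
    (hg₂ : ContDiff ℝ 1 g₂) (hs₂ : HasCompactSupport g₂)
    {u v : ℝ × ℝ} (hu : u ≠ 0) (hv : v ≠ 0) (h : Xbeam u g₁ = Xbeam v g₂) (x : ℝ × ℝ) :
    fderiv ℝ g₂ x u = fderiv ℝ g₁ x v := by
  have hloop :=
    integral_add_integral_eq_of_Xbeam_eq hg₁.continuous hs₁ hg₂.continuous hs₂ hu hv h x
  have hcont₁ : Continuous fun t : ℝ => fderiv ℝ g₁ (x + t • u) v :=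
    ((hg₁.continuous_fderiv one_ne_zero).comp (by fun_prop)).clm_apply continuous_const
  have hstep : ∀ s, g₂ (x + s • u) = g₂ x + ∫ t in (0 : ℝ)..s, fderiv ℝ g₁ (x + t • u) v := by
    intro s
    have hleft := ((Continuous.integral_hasStrictDerivAt
      (by fun_prop : Continuous fun t => g₂ (x + s • u + t • v)) 0 0).hasDerivAt.const_add
        (∫ t in (0 : ℝ)..s, g₁ (x + t • u)))
    have hright := ((Continuous.integral_hasStrictDerivAt
      (by fun_prop : Continuous fun t => g₂ (x + t • v)) 0 0).hasDerivAt.add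
        (hasDerivAt_intervalIntegral_comp_add_smul hg₁
          (by fun_prop : Continuous fun t => x + t • u) v 0 s))
    simp only [zero_smul, add_zero] at hleft hright
    exact (funext (hloop s) ▸ hleft).unique hright
  have hleft : HasDerivAt (fun s : ℝ => g₂ (x + s • u)) (fderiv ℝ g₂ x u) 0 :=
    (hg₂.differentiable one_ne_zero x).hasFDerivAt.hasLineDerivAt u
  have hright := ((hcont₁.integral_hasStrictDerivAt 0 0).hasDerivAt.const_add (g₂ x))
  simp only [zero_smul, add_zero] at hright
  exact hleft.unique (by simpa only [hstep] using hright)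

lemma det_ne_zero_of_linearIndependent {u v : ℝ × ℝ} (h : LinearIndependent ℝ ![u, v]) :
    u.1 * v.2 - u.2 * v.1 ≠ 0 := by
  intro hdet
  rw [LinearIndependent.pair_iff] at h
  have hcomb : ∀ a b : ℝ, a • u + b • v = (a * u.1 + b * v.1, a * u.2 + b * v.2) :=
    fun _ _ => rfl
  have h₁ := h v.1 (-u.1) (by rw [hcomb, Prod.mk_eq_zero]; constructor <;> linarith)
  have h₂ := h v.2 (-u.2) (by rw [hcomb, Prod.mk_eq_zero]; constructor <;> linarith)
  have hu : u = 0 := Prod.ext (neg_eq_zero.1 h₁.2) (neg_eq_zero.1 h₂.2)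
  exact one_ne_zero (h 1 0 (by simp [hu])).1

lemma fderiv_dot_sub_fderiv_dot {f₁ f₂ : ℝ × ℝ → ℝ} {x : ℝ × ℝ}
    (hf₁ : DifferentiableAt ℝ f₁ x) (hf₂ : DifferentiableAt ℝ f₂ x) (u v : ℝ × ℝ) :
    fderiv ℝ (fun y => f₁ y * v.1 + f₂ y * v.2) x u
        - fderiv ℝ (fun y => f₁ y * u.1 + f₂ y * u.2) x v
      = (u.1 * v.2 - u.2 * v.1) * curlf f₁ f₂ x := by
  have hdot : ∀ c w : ℝ × ℝ, fderiv ℝ (fun y => f₁ y * c.1 + f₂ y * c.2) x w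
      = fderiv ℝ f₁ x w * c.1 + fderiv ℝ f₂ x w * c.2 := fun c w => by
    rw [(show HasFDerivAt (fun y => f₁ y * c.1 + f₂ y * c.2) _ x from
      (hf₁.hasFDerivAt.mul_const c.1).add (hf₂.hasFDerivAt.mul_const c.2)).fderiv]
    simp [mul_comm]
  have hcoord : ∀ (L : ℝ × ℝ →L[ℝ] ℝ) (w : ℝ × ℝ),
      L w = w.1 * L (1, 0) + w.2 * L (0, 1) := by
    intro L w
    conv_lhs =>
      rw [show w = w.1 • ((1 : ℝ), (0 : ℝ)) + w.2 • ((0 : ℝ), (1 : ℝ)) by ext <;> simp]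
    rw [map_add, map_smul, map_smul, smul_eq_mul, smul_eq_mul]
  rw [hdot, hdot, hcoord (fderiv ℝ f₁ x) u, hcoord (fderiv ℝ f₂ x) u,
    hcoord (fderiv ℝ f₁ x) v, hcoord (fderiv ℝ f₂ x) v, curlf]
  ring

lemma Differentiable.eq_zero_of_hasCompactSupport {E F : Type*} [NormedAddCommGroup E]
    [NormedSpace ℂ E] [Nontrivial E] [NormedAddCommGroup F] [NormedSpace ℂ F] {f : E → F}
    (hf : Differentiable ℂ f) (hs : HasCompactSupport f) : f = 0 :=
  hf.eq_const_of_tendsto_cocompact hs.is_zero_at_infty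

lemma eq_zero_of_divf_eq_zero_of_curlf_eq_zero {f₁ f₂ : ℝ × ℝ → ℝ}
    (hf₁ : Differentiable ℝ f₁) (hs₁ : HasCompactSupport f₁)
    (hf₂ : Differentiable ℝ f₂) (hs₂ : HasCompactSupport f₂)
    (hdiv : ∀ x, divf f₁ f₂ x = 0) (hcurl : ∀ x, curlf f₁ f₂ x = 0) (x : ℝ × ℝ) :
    f₁ x = 0 ∧ f₂ x = 0 := by
  set e := Complex.equivRealProdCLM
  set F : ℂ → ℂ := fun z => e.symm (f₁ (e z), -f₂ (e z))
  have hFderiv : ∀ z, HasFDerivAt F ((e.symm : ℝ × ℝ →L[ℝ] ℂ).comp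
      (((fderiv ℝ f₁ (e z)).prod (-fderiv ℝ f₂ (e z))).comp (e : ℂ →L[ℝ] ℝ × ℝ))) z := fun z =>
    e.symm.hasFDerivAt.comp z
      (((hf₁ (e z)).hasFDerivAt.prodMk (hf₂ (e z)).hasFDerivAt.neg).comp z e.hasFDerivAt)
  have hF : Differentiable ℂ F := fun z => by
    refine differentiableAt_complex_iff_differentiableAt_real.2
      ⟨(hFderiv z).differentiableAt, ?_⟩
    rw [(hFderiv z).fderiv]
    apply Complex.ext
    · simpa [e] using (sub_eq_zero.1 (hcurl (z.re, z.im))).symm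
    · simpa [e] using neg_eq_of_add_eq_zero_left (hdiv (z.re, z.im))
  have hFs : HasCompactSupport F :=
    (hs₁.comp_homeomorph e.toHomeomorph).comp₂_left (hs₂.comp_homeomorph e.toHomeomorph)
      (m := fun a b => e.symm (a, -b)) (by simp)
  simpa [F, e] using congrFun (hF.eq_zero_of_hasCompactSupport hFs) (e.symm x)

lemma IsC2c.dot {f₁ f₂ : ℝ × ℝ → ℝ} (hf₁ : IsC2c f₁) (hf₂ : IsC2c f₂) (c : ℝ × ℝ) :
    IsC2c fun y => f₁ y * c.1 + f₂ y * c.2 :=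
  ⟨(hf₁.1.mul contDiff_const).add (hf₂.1.mul contDiff_const),
    hf₁.2.mul_right.add hf₂.2.mul_right⟩

theorem stmt4_general (u v : ℝ × ℝ)
    (huv : LinearIndependent ℝ ![u, v])
    (f₁ f₂ : ℝ × ℝ → ℝ) (hf₁ : IsC2c f₁) (hf₂ : IsC2c f₂)
    (hdiv : ∀ x, divf f₁ f₂ x = 0)
    (hL : ∀ x, VlineL u v f₁ f₂ x = 0) :
    ∀ x, f₁ x = 0 ∧ f₂ x = 0 := by
  have hdiff₁ : Differentiable ℝ f₁ := hf₁.1.differentiable two_ne_zero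
  have hdiff₂ : Differentiable ℝ f₂ := hf₂.1.differentiable two_ne_zero
  have hu : u ≠ 0 := huv.ne_zero 0
  have hv : v ≠ 0 := huv.ne_zero 1
  have hgu := hf₁.dot hf₂ u
  have hgv := hf₁.dot hf₂ v
  have hXbeam : Xbeam u (fun y => f₁ y * u.1 + f₂ y * u.2)
      = Xbeam v (fun y => f₁ y * v.1 + f₂ y * v.2) := funext fun x => by
    have hLx := hL x
    rw [VlineL] at hLx
    linarith
  have hcurl : ∀ x, curlf f₁ f₂ x = 0 := fun x => by
    have hcross := fderiv_dot_sub_fderiv_dot (hdiff₁ x) (hdiff₂ x) u v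
    rw [fderiv_apply_eq_of_Xbeam_eq (hgu.1.of_le one_le_two) hgu.2 (hgv.1.of_le one_le_two) hgv.2
      hu hv hXbeam x, sub_self] at hcross
    exact (mul_eq_zero.1 hcross.symm).resolve_left (det_ne_zero_of_linearIndependent huv)
  exact eq_zero_of_divf_eq_zero_of_curlf_eq_zero hdiff₁ hf₁.2 hdiff₂ hf₂.2 hdiv hcurl

/-- `L` is injective on compactly supported divergence-free fields. -/
theorem stmt4 (u v : ℝ × ℝ) (hu : u.1 ^ 2 + u.2 ^ 2 = 1) (hv : v.1 ^ 2 + v.2 ^ 2 = 1)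
    (huv : LinearIndependent ℝ ![u, v])
    (f₁ f₂ : ℝ × ℝ → ℝ) (hf₁ : IsC2c f₁) (hf₂ : IsC2c f₂)
    (hdiv : ∀ x, divf f₁ f₂ x = 0)
    (hL : ∀ x, VlineL u v f₁ f₂ x = 0) :
    ∀ x, f₁ x = 0 ∧ f₂ x = 0 :=
  stmt4_general u v huv f₁ f₂ hf₁ hf₂ hdiv hL
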